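/- Consider the convex program: minimize Σ_w λ_w Σ_u p_{uw} c_{uw} over p = (p_{uw}) subject to the linear equality constraints Σ_w λ_w p_{uw} = P_U(u) for all u, Σ_u p_{uw} = 1 for all w ∈ supp λ, and the convex inequality constraint Σ_w λ_w Σ_u h(p_{uw}) + H(U) - R ≤ 0, where h(x) = x log₂ x for x ≥ 0 (h(0)=0) and h = +∞ on negatives. Suppose p* is optimal for the program with weights λ, with associated Lagrange multipliers (ν₁*, ν₂*, ν₃*) forming a saddle point. If λ̃ ∈ Δ(𝒲) with supp λ̃ ⊆ supp λ is such that (i) Σ_w λ̃_w p*_{uw} = P_U(u) for all u, (ii) Σ_w λ̃_w Σ_u h(p*_{uw}) = Σ_w λ_w Σ_u h(p*_{uw}), and (iii) Σ_w λ̃_w Σ_u p*_{uw} c_{uw} = Σ_w λ_w Σ_u p*_{uw} c_{uw}, then (p*, ν₁*, ν₂*, ν₃*) is also a saddle point of the Lagrangian of the program with weights λ̃, and hence p* is optimal for the λ̃-program with the same optimal value. -/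

import Mathlib

open scoped BigOperators

noncomputable section

variable {𝒰 𝒲 : Type*} [Fintype 𝒰] [Fintype 𝒲]

/-- `h(x) = x log₂ x` (with `h(0) = 0`). -/
def hEnt (x : ℝ) : ℝ := x * Real.logb 2 x

/-- Entropy (in bits) of the source distribution. -/
def HU (PU : 𝒰 → ℝ) : ℝ := -∑ u : 𝒰, PU u * Real.logb 2 (PU u)

/-- Objective of the convex program with weights `lam`. -/
def obj (lam : 𝒲 → ℝ) (c : 𝒰 → 𝒲 → ℝ) (p : 𝒰 → 𝒲 → ℝ) : ℝ :=
  ∑ w : 𝒲, lam w * ∑ u : 𝒰, p u w * c u w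

/-- Feasibility for the convex program with weights `lam`. -/
def Feas (lam : 𝒲 → ℝ) (PU : 𝒰 → ℝ) (R : ℝ) (p : 𝒰 → 𝒲 → ℝ) : Prop :=
  (∀ u w, 0 ≤ p u w) ∧
  (∀ u, ∑ w : 𝒲, lam w * p u w = PU u) ∧
  (∀ w, lam w ≠ 0 → ∑ u : 𝒰, p u w = 1) ∧
  (∑ w : 𝒲, lam w * ∑ u : 𝒰, hEnt (p u w)) + HU PU - R ≤ 0

/-- Lagrangian of the convex program with weights `lam`. -/
def Lag (lam : 𝒲 → ℝ) (PU : 𝒰 → ℝ) (R : ℝ) (c : 𝒰 → 𝒲 → ℝ)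
    (p : 𝒰 → 𝒲 → ℝ) (ν₁ : 𝒰 → ℝ) (ν₂ : 𝒲 → ℝ) (ν₃ : ℝ) : ℝ :=
  obj lam c p
    + ∑ u : 𝒰, ν₁ u * ((∑ w : 𝒲, lam w * p u w) - PU u)
    + ∑ w : 𝒲, ν₂ w * (lam w * ((∑ u : 𝒰, p u w) - 1))
    + ν₃ * ((∑ w : 𝒲, lam w * ∑ u : 𝒰, hEnt (p u w)) + HU PU - R)

/-- `(p*, ν*)` is a saddle point of the Lagrangian with weights `lam`
(over nonnegative `p` and multipliers with `ν₃ ≥ 0`). -/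
def SaddlePoint (lam : 𝒲 → ℝ) (PU : 𝒰 → ℝ) (R : ℝ) (c : 𝒰 → 𝒲 → ℝ)
    (p : 𝒰 → 𝒲 → ℝ) (ν₁ : 𝒰 → ℝ) (ν₂ : 𝒲 → ℝ) (ν₃ : ℝ) : Prop :=
  (∀ (μ₁ : 𝒰 → ℝ) (μ₂ : 𝒲 → ℝ) (μ₃ : ℝ), 0 ≤ μ₃ →
      Lag lam PU R c p μ₁ μ₂ μ₃ ≤ Lag lam PU R c p ν₁ ν₂ ν₃) ∧
  (∀ q : 𝒰 → 𝒲 → ℝ, (∀ u w, 0 ≤ q u w) →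
      Lag lam PU R c p ν₁ ν₂ ν₃ ≤ Lag lam PU R c q ν₁ ν₂ ν₃)

/-
The Lagrangian splits as `∑ w, λ w * colLag w (p · w)` plus a term not depending on `p`, and
`colLag` does not involve the weights. Hence the `p`-half of the saddle condition says exactly
that every column `p* · w` with `λ w > 0` minimises `colLag w` over nonnegative vectors, and this
survives passing to any `λ̃` with smaller support. The multiplier half amounts to primal
feasibility and complementary slackness `ν₃ * slack = 0`, and hypotheses (i) and (ii) say that
the constraint values of `p*` are the same for `λ̃` as for `λ`. Finally a saddle point with
`ν₃ ≥ 0` is optimal by weak duality, and (iii) gives the common optimal value.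
-/

theorem Finset.le_of_sum_le_sum_update {ι α M : Type*} [Fintype ι] [DecidableEq ι]
    [AddCommMonoid M] [PartialOrder M] [IsOrderedCancelAddMonoid M]
    (f : ι → α → M) (F : ι → α) (i : ι) (a : α)
    (h : ∑ j, f j (F j) ≤ ∑ j, f j (Function.update F i a j)) : f i (F i) ≤ f i a := by
  simp only [Function.apply_update f F i a] at h
  rwa [Finset.sum_update_of_mem (Finset.mem_univ i),
    Finset.sum_eq_add_sum_sdiff_singleton_of_mem (Finset.mem_univ i), add_le_add_iff_right] at h

def entropySlack (lam : 𝒲 → ℝ) (PU : 𝒰 → ℝ) (R : ℝ) (p : 𝒰 → 𝒲 → ℝ) : ℝ :=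
  (∑ w : 𝒲, lam w * ∑ u : 𝒰, hEnt (p u w)) + HU PU - R

def colLag (c : 𝒰 → 𝒲 → ℝ) (ν₁ : 𝒰 → ℝ) (ν₂ : 𝒲 → ℝ) (ν₃ : ℝ) (w : 𝒲) (x : 𝒰 → ℝ) : ℝ :=
  (∑ u : 𝒰, x u * c u w) + (∑ u : 𝒰, ν₁ u * x u) + ν₂ w * ((∑ u : 𝒰, x u) - 1)
    + ν₃ * ∑ u : 𝒰, hEnt (x u)

theorem Lag_eq_sum_colLag (lam : 𝒲 → ℝ) (PU : 𝒰 → ℝ) (R : ℝ) (c : 𝒰 → 𝒲 → ℝ)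
    (p : 𝒰 → 𝒲 → ℝ) (ν₁ : 𝒰 → ℝ) (ν₂ : 𝒲 → ℝ) (ν₃ : ℝ) :
    Lag lam PU R c p ν₁ ν₂ ν₃
      = (∑ w : 𝒲, lam w * colLag c ν₁ ν₂ ν₃ w (fun u => p u w))
        + (ν₃ * (HU PU - R) - ∑ u : 𝒰, ν₁ u * PU u) := by
  have hmarg : ∑ u : 𝒰, ν₁ u * ((∑ w : 𝒲, lam w * p u w) - PU u)
      = (∑ w : 𝒲, lam w * ∑ u : 𝒰, ν₁ u * p u w) - ∑ u : 𝒰, ν₁ u * PU u := by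
    simp only [mul_sub, Finset.sum_sub_distrib, Finset.mul_sum]
    rw [Finset.sum_comm]
    congr 1
    exact Finset.sum_congr rfl fun w _ => Finset.sum_congr rfl fun u _ => by ring
  have hrow : ∑ w : 𝒲, ν₂ w * (lam w * ((∑ u : 𝒰, p u w) - 1))
      = ∑ w : 𝒲, lam w * (ν₂ w * ((∑ u : 𝒰, p u w) - 1)) :=
    Finset.sum_congr rfl fun w _ => by ring
  have hent : ν₃ * ((∑ w : 𝒲, lam w * ∑ u : 𝒰, hEnt (p u w)) + HU PU - R)
      = (∑ w : 𝒲, lam w * (ν₃ * ∑ u : 𝒰, hEnt (p u w))) + ν₃ * (HU PU - R) := by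
    rw [add_sub_assoc, mul_add, Finset.mul_sum]
    congr 1
    exact Finset.sum_congr rfl fun w _ => by ring
  rw [Lag, obj, hmarg, hrow, hent]
  simp only [colLag, mul_add, Finset.sum_add_distrib]
  ring

theorem Lag_eq_obj_add_mul_entropySlack {lam : 𝒲 → ℝ} {PU : 𝒰 → ℝ} (R : ℝ) (c : 𝒰 → 𝒲 → ℝ)
    {p : 𝒰 → 𝒲 → ℝ} (hmarg : ∀ u, ∑ w : 𝒲, lam w * p u w = PU u)
    (hrow : ∀ w, lam w ≠ 0 → ∑ u : 𝒰, p u w = 1) (μ₁ : 𝒰 → ℝ) (μ₂ : 𝒲 → ℝ) (μ₃ : ℝ) :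
    Lag lam PU R c p μ₁ μ₂ μ₃ = obj lam c p + μ₃ * entropySlack lam PU R p := by
  have hmarg_term : ∑ u : 𝒰, μ₁ u * ((∑ w : 𝒲, lam w * p u w) - PU u) = 0 :=
    Finset.sum_eq_zero fun u _ => by rw [hmarg u, sub_self, mul_zero]
  have hrow_term : ∑ w : 𝒲, μ₂ w * (lam w * ((∑ u : 𝒰, p u w) - 1)) = 0 := by
    refine Finset.sum_eq_zero fun w _ => ?_
    rcases eq_or_ne (lam w) 0 with hw | hw
    · rw [hw, zero_mul, mul_zero]
    · rw [hrow w hw, sub_self, mul_zero, mul_zero]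
  rw [Lag, hmarg_term, hrow_term, entropySlack]
  ring

theorem Lag_eq_of_feas {lam : 𝒲 → ℝ} {PU : 𝒰 → ℝ} {R : ℝ} (c : 𝒰 → 𝒲 → ℝ)
    {p : 𝒰 → 𝒲 → ℝ} (hp : Feas lam PU R p) (μ₁ : 𝒰 → ℝ) (μ₂ : 𝒲 → ℝ) (μ₃ : ℝ) :
    Lag lam PU R c p μ₁ μ₂ μ₃ = obj lam c p + μ₃ * entropySlack lam PU R p :=
  Lag_eq_obj_add_mul_entropySlack R c hp.2.1 hp.2.2.1 μ₁ μ₂ μ₃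

namespace SaddlePoint

variable {lam : 𝒲 → ℝ} {PU : 𝒰 → ℝ} {R : ℝ} {c : 𝒰 → 𝒲 → ℝ} {p : 𝒰 → 𝒲 → ℝ}
  {ν₁ : 𝒰 → ℝ} {ν₂ : 𝒲 → ℝ} {ν₃ : ℝ}

theorem mul_entropySlack_eq_zero (h : SaddlePoint lam PU R c p ν₁ ν₂ ν₃)
    (hp : Feas lam PU R p) (hν₃ : 0 ≤ ν₃) : ν₃ * entropySlack lam PU R p = 0 := by
  have hmax := h.1 ν₁ ν₂ 0 le_rfl
  rw [Lag_eq_of_feas c hp, Lag_eq_of_feas c hp] at hmax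
  have hslack : entropySlack lam PU R p ≤ 0 := hp.2.2.2
  nlinarith

theorem colLag_le (h : SaddlePoint lam PU R c p ν₁ ν₂ ν₃) (hp : ∀ u w, 0 ≤ p u w)
    {w : 𝒲} (hw : 0 < lam w) {x : 𝒰 → ℝ} (hx : ∀ u, 0 ≤ x u) :
    colLag c ν₁ ν₂ ν₃ w (fun u => p u w) ≤ colLag c ν₁ ν₂ ν₃ w x := by
  classical
  let cols : 𝒲 → 𝒰 → ℝ := Function.update (fun w' u => p u w') w x
  have hcols : ∀ u w', 0 ≤ cols w' u := by
    intro u w'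
    rcases eq_or_ne w' w with rfl | hne
    · simpa [cols] using hx u
    · simpa [cols, hne] using hp u w'
  have hmin := h.2 (fun u w' => cols w' u) hcols
  rw [Lag_eq_sum_colLag, Lag_eq_sum_colLag, add_le_add_iff_right] at hmin
  have hweighted := Finset.le_of_sum_le_sum_update
    (fun w' y => lam w' * colLag c ν₁ ν₂ ν₃ w' y) (fun w' u => p u w') w x hmin
  exact le_of_mul_le_mul_left hweighted hw

theorem obj_le (h : SaddlePoint lam PU R c p ν₁ ν₂ ν₃) (hp : Feas lam PU R p) (hν₃ : 0 ≤ ν₃)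
    {q : 𝒰 → 𝒲 → ℝ} (hq : Feas lam PU R q) : obj lam c p ≤ obj lam c q := by
  have hmin := h.2 q hq.1
  rw [Lag_eq_of_feas c hp, Lag_eq_of_feas c hq, h.mul_entropySlack_eq_zero hp hν₃] at hmin
  have hq_slack : ν₃ * entropySlack lam PU R q ≤ 0 := mul_nonpos_of_nonneg_of_nonpos hν₃ hq.2.2.2
  linarith

end SaddlePoint

theorem saddlePoint_of_colLag_le {lam : 𝒲 → ℝ} {PU : 𝒰 → ℝ} {R : ℝ} {c : 𝒰 → 𝒲 → ℝ}
    {p : 𝒰 → 𝒲 → ℝ} {ν₁ : 𝒰 → ℝ} {ν₂ : 𝒲 → ℝ} {ν₃ : ℝ} (hlam : ∀ w, 0 ≤ lam w)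
    (hp : Feas lam PU R p) (hcs : ν₃ * entropySlack lam PU R p = 0)
    (hcol : ∀ w, lam w ≠ 0 → ∀ x : 𝒰 → ℝ, (∀ u, 0 ≤ x u) →
      colLag c ν₁ ν₂ ν₃ w (fun u => p u w) ≤ colLag c ν₁ ν₂ ν₃ w x) :
    SaddlePoint lam PU R c p ν₁ ν₂ ν₃ := by
  refine ⟨fun μ₁ μ₂ μ₃ hμ₃ => ?_, fun q hq => ?_⟩
  · rw [Lag_eq_of_feas c hp, Lag_eq_of_feas c hp, hcs]
    have hslack : μ₃ * entropySlack lam PU R p ≤ 0 := mul_nonpos_of_nonneg_of_nonpos hμ₃ hp.2.2.2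
    linarith
  · rw [Lag_eq_sum_colLag, Lag_eq_sum_colLag, add_le_add_iff_right]
    refine Finset.sum_le_sum fun w _ => ?_
    rcases eq_or_ne (lam w) 0 with hw | hw
    · simp [hw]
    · exact mul_le_mul_of_nonneg_left (hcol w hw _ fun u => hq u w) (hlam w)

theorem saddle_point_transfer_general
    (lam lamt : 𝒲 → ℝ) (PU : 𝒰 → ℝ) (R : ℝ) (c : 𝒰 → 𝒲 → ℝ)
    (hlam0 : ∀ w, 0 ≤ lam w)
    (hlamt0 : ∀ w, 0 ≤ lamt w)
    (hsupp : ∀ w, lam w = 0 → lamt w = 0)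
    (pstar : 𝒰 → 𝒲 → ℝ) (ν₁ : 𝒰 → ℝ) (ν₂ : 𝒲 → ℝ) (ν₃ : ℝ) (hν₃ : 0 ≤ ν₃)
    (hfeas : Feas lam PU R pstar)
    (hsaddle : SaddlePoint lam PU R c pstar ν₁ ν₂ ν₃)
    (hi : ∀ u, ∑ w : 𝒲, lamt w * pstar u w = PU u)
    (hii : (∑ w : 𝒲, lamt w * ∑ u : 𝒰, hEnt (pstar u w))
          = ∑ w : 𝒲, lam w * ∑ u : 𝒰, hEnt (pstar u w))
    (hiii : obj lamt c pstar = obj lam c pstar) :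
    SaddlePoint lamt PU R c pstar ν₁ ν₂ ν₃ ∧
    Feas lamt PU R pstar ∧
    (∀ q, Feas lamt PU R q → obj lamt c pstar ≤ obj lamt c q) ∧
    obj lamt c pstar = obj lam c pstar := by
  have hlam_pos : ∀ w, lamt w ≠ 0 → 0 < lam w := fun w hw =>
    (hlam0 w).lt_of_ne' (mt (hsupp w) hw)
  have hslack : entropySlack lamt PU R pstar = entropySlack lam PU R pstar := by
    rw [entropySlack, entropySlack, hii]
  have hfeast : Feas lamt PU R pstar :=
    ⟨hfeas.1, hi, fun w hw => hfeas.2.2.1 w (hlam_pos w hw).ne',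
      show entropySlack lamt PU R pstar ≤ 0 from hslack ▸ hfeas.2.2.2⟩
  have hsaddlet : SaddlePoint lamt PU R c pstar ν₁ ν₂ ν₃ :=
    saddlePoint_of_colLag_le hlamt0 hfeast
      (hslack ▸ hsaddle.mul_entropySlack_eq_zero hfeas hν₃)
      fun w hw _ hx => hsaddle.colLag_le hfeas.1 (hlam_pos w hw) hx
  exact ⟨hsaddlet, hfeast, fun _ hq => hsaddlet.obj_le hfeast hν₃ hq, hiii⟩

/-- Transfer of optimality from weights `λ` to weights `λ̃`: if `p*` is optimal for the
`λ`-program with saddle-point multipliers `(ν₁*, ν₂*, ν₃*)`, and `λ̃` has support inside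
that of `λ` and preserves the marginal, entropy and cost averages of `p*`, then
`(p*, ν*)` is a saddle point for the `λ̃`-program and `p*` is optimal for it with the
same optimal value. -/
theorem saddle_point_transfer
    (lam lamt : 𝒲 → ℝ) (PU : 𝒰 → ℝ) (R : ℝ) (c : 𝒰 → 𝒲 → ℝ)
    (hlam0 : ∀ w, 0 ≤ lam w) (hlam1 : ∑ w : 𝒲, lam w = 1)
    (hlamt0 : ∀ w, 0 ≤ lamt w) (hlamt1 : ∑ w : 𝒲, lamt w = 1)
    (hPU0 : ∀ u, 0 ≤ PU u) (hPU1 : ∑ u : 𝒰, PU u = 1) (hR : 0 ≤ R)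
    (hsupp : ∀ w, lam w = 0 → lamt w = 0)
    (pstar : 𝒰 → 𝒲 → ℝ) (ν₁ : 𝒰 → ℝ) (ν₂ : 𝒲 → ℝ) (ν₃ : ℝ) (hν₃ : 0 ≤ ν₃)
    (hfeas : Feas lam PU R pstar)
    (hopt : ∀ q, Feas lam PU R q → obj lam c pstar ≤ obj lam c q)
    (hsaddle : SaddlePoint lam PU R c pstar ν₁ ν₂ ν₃)
    (hi : ∀ u, ∑ w : 𝒲, lamt w * pstar u w = PU u)
    (hii : (∑ w : 𝒲, lamt w * ∑ u : 𝒰, hEnt (pstar u w))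
          = ∑ w : 𝒲, lam w * ∑ u : 𝒰, hEnt (pstar u w))
    (hiii : obj lamt c pstar = obj lam c pstar) :
    SaddlePoint lamt PU R c pstar ν₁ ν₂ ν₃ ∧
    Feas lamt PU R pstar ∧
    (∀ q, Feas lamt PU R q → obj lamt c pstar ≤ obj lamt c q) ∧
    obj lamt c pstar = obj lam c pstar :=
  saddle_point_transfer_general lam lamt PU R c hlam0 hlamt0 hsupp pstar ν₁ ν₂ ν₃ hν₃ hfeas hsaddle
    hi hii hiii

end
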